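/- Let A ∈ ℝ^{m×n} and B ∈ ℝ^{n×p}, let β ∈ (0,1], and let p₁,…,p_n be probabilities with Σ_i p_i = 1 and p_i ≥ β ‖A_{*i}‖₂² / ‖A‖_F² for all i = 1,…,n. Let W ∈ ℝ^{s×n} be the random sampling-and-rescaling matrix of Algorithm 1 built from these probabilities. Then E[‖A Wᵀ W B − A B‖_F²] ≤ (1/(β s)) ‖A‖_F² ‖B‖_F², and, if in addition m = p, E[(tr(A Wᵀ W B − A B))²] ≤ (1/(β s)) ‖A‖_F² ‖B‖_F². -/

import Mathlib

/-!
Row `t` of `W` selects column `ω t` of `A` (row `ω t` of `B`) with probability `p (ω t)`, so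
`A Wᵀ W B = (1/s) ∑ₜ X (ω t)` with `X k = A_{*k} B_{k*} / p k`: an average of `s` independent
unbiased estimators of `A B`. Entrywise, such an average has variance at most
`(1/s) ∑ₖ pₖ (X k)ᵢⱼ²`; summed over the entries this is `(1/s) ∑ₖ ‖A_{*k}‖² ‖B_{k*}‖² / pₖ`,
and the sampling condition `‖A_{*k}‖² ≤ pₖ ‖A‖_F² / β` bounds it by `‖A‖_F² ‖B‖_F² / (β s)`.
The trace is the average of the scalar estimators `tr (X k) = ∑ᵢ Aᵢₖ Cₖᵢ / pₖ`, and
Cauchy–Schwarz gives the same bound for their second moments.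
-/

open Matrix BigOperators

noncomputable def frobNorm {m n : Type*} [Fintype m] [Fintype n]
    (A : Matrix m n ℝ) : ℝ := Real.sqrt (∑ i, ∑ j, (A i j) ^ 2)

noncomputable def specNorm {m n : ℕ} (A : Matrix (Fin m) (Fin n) ℝ) : ℝ :=
  ‖LinearMap.toContinuousLinearMap (Matrix.toEuclideanLin A)‖

noncomputable def truncDiag {r : ℕ} (σ : Fin r → ℝ) (m : ℕ) :
    Matrix (Fin r) (Fin r) ℝ :=
  Matrix.diagonal fun i => if (i : ℕ) < m then σ i else 0

noncomputable def samplingMatrix {n : ℕ} (p : Fin n → ℝ) (s : ℕ) (ω : Fin s → Fin n) :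
    Matrix (Fin s) (Fin n) ℝ :=
  fun i j => if j = ω i then 1 / Real.sqrt (s * p j) else 0

noncomputable def expec {n s : ℕ} (p : Fin n → ℝ) (f : (Fin s → Fin n) → ℝ) : ℝ :=
  ∑ ω : Fin s → Fin n, (∏ i, p (ω i)) * f ω

open Classical in
noncomputable def probOf {n s : ℕ} (p : Fin n → ℝ) (E : (Fin s → Fin n) → Prop) : ℝ :=
  ∑ ω : Fin s → Fin n, if E ω then (∏ i, p (ω i)) else 0

def firstCols {n r : ℕ} (U : Matrix (Fin n) (Fin r) ℝ) (k : ℕ) (h : k ≤ r) :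
    Matrix (Fin n) (Fin k) ℝ :=
  fun i j => U i (Fin.castLE h j)

noncomputable def ridgeDiag {r : ℕ} (σ : Fin r → ℝ) (lam : ℝ) :
    Matrix (Fin r) (Fin r) ℝ :=
  Matrix.diagonal fun i => σ i / Real.sqrt (σ i ^ 2 + lam)

section Expectation

variable {n s : ℕ} (p : Fin n → ℝ)

lemma expec_sum {ι : Type*} (t : Finset ι) (f : ι → (Fin s → Fin n) → ℝ) :
    expec p (fun ω => ∑ x ∈ t, f x ω) = ∑ x ∈ t, expec p (f x) := by
  simp only [expec, Finset.mul_sum]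
  exact Finset.sum_comm

lemma expec_const_mul (c : ℝ) (f : (Fin s → Fin n) → ℝ) :
    expec p (fun ω => c * f ω) = c * expec p f := by
  simp only [expec, Finset.mul_sum, mul_left_comm]

lemma expec_prod (f : Fin s → Fin n → ℝ) :
    expec p (fun ω => ∏ i, f i (ω i)) = ∏ i, ∑ k, p k * f i k := by
  rw [Finset.prod_univ_sum, Fintype.piFinset_univ]
  simp only [expec, Finset.prod_mul_distrib]

variable {p}

lemma expec_eval (hsum : ∑ k, p k = 1) (g : Fin n → ℝ) (t : Fin s) :
    expec p (fun ω => g (ω t)) = ∑ k, p k * g k := by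
  have hprod : (fun ω : Fin s → Fin n => g (ω t)) =
      fun ω => ∏ i, if i = t then g (ω i) else 1 := by
    simp
  rw [hprod, expec_prod p (fun i k => if i = t then g k else 1)]
  have hfactor : ∀ i, ∑ k, p k * (if i = t then g k else 1) =
      if i = t then ∑ k, p k * g k else 1 := by
    intro i
    split_ifs <;> simp [hsum]
  simp only [hfactor, Finset.prod_ite_eq', Finset.mem_univ, if_true]

lemma expec_eval_mul_eval (hsum : ∑ k, p k = 1) (g h : Fin n → ℝ) {t t' : Fin s}
    (htt' : t ≠ t') :
    expec p (fun ω => g (ω t) * h (ω t')) = (∑ k, p k * g k) * ∑ k, p k * h k := by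
  have hprod : (fun ω : Fin s → Fin n => g (ω t) * h (ω t')) =
      fun ω => ∏ i, (if i = t then g (ω i) else 1) * (if i = t' then h (ω i) else 1) := by
    simp only [Finset.prod_mul_distrib, Finset.prod_ite_eq', Finset.mem_univ, if_true]
  rw [hprod, expec_prod p (fun i k => (if i = t then g k else 1) * (if i = t' then h k else 1))]
  have hfactor : ∀ i, ∑ k, p k * ((if i = t then g k else 1) * (if i = t' then h k else 1)) =
      (if i = t then ∑ k, p k * g k else 1) * (if i = t' then ∑ k, p k * h k else 1) := by
    intro i
    by_cases hit : i = t
    · simp [hit, htt']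
    · by_cases hit' : i = t' <;> simp [hit, hit', hsum, Ne.symm htt']
  simp only [hfactor, Finset.prod_mul_distrib, Finset.prod_ite_eq', Finset.mem_univ, if_true]

lemma expec_sq_sum_eval_of_centered (hsum : ∑ k, p k = 1) (g : Fin n → ℝ)
    (hg : ∑ k, p k * g k = 0) :
    expec p (fun ω : Fin s → Fin n => (∑ t, g (ω t)) ^ 2) = s * ∑ k, p k * g k ^ 2 := by
  have hexpand : ∀ ω : Fin s → Fin n,
      (∑ t, g (ω t)) ^ 2 = ∑ t, ∑ t', g (ω t) * g (ω t') := by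
    intro ω
    rw [sq, Finset.sum_mul_sum]
  have hdiag : ∀ t : Fin s,
      ∑ t', expec p (fun ω => g (ω t) * g (ω t')) = ∑ k, p k * g k ^ 2 := by
    intro t
    rw [Finset.sum_eq_single t
      (fun t' _ ht' => by rw [expec_eval_mul_eval hsum g g (Ne.symm ht'), hg, zero_mul])
      (by simp)]
    simpa only [sq] using expec_eval hsum (fun k => g k * g k) t
  simp only [hexpand, expec_sum, hdiag, Finset.sum_const, Finset.card_univ, Fintype.card_fin,
    nsmul_eq_mul]

lemma sum_mul_sub_sq_le (hsum : ∑ k, p k = 1) (a : Fin n → ℝ) :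
    ∑ k, p k * (a k - ∑ l, p l * a l) ^ 2 ≤ ∑ k, p k * a k ^ 2 := by
  set μ := ∑ l, p l * a l
  have hvar : ∑ k, p k * (a k - μ) ^ 2 = ∑ k, p k * a k ^ 2 - μ ^ 2 := by
    have hterm : ∀ k, p k * (a k - μ) ^ 2 = p k * a k ^ 2 - 2 * μ * (p k * a k) + μ ^ 2 * p k :=
      fun k => by ring
    simp only [hterm, Finset.sum_add_distrib, Finset.sum_sub_distrib, ← Finset.mul_sum, hsum]
    ring
  linarith [sq_nonneg μ]

lemma expec_sq_sampleMean_sub_le (hs : 0 < s) (hsum : ∑ k, p k = 1) (a : Fin n → ℝ) :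
    expec p (fun ω : Fin s → Fin n => (1 / s * ∑ t, a (ω t) - ∑ k, p k * a k) ^ 2)
      ≤ 1 / s * ∑ k, p k * a k ^ 2 := by
  set μ := ∑ k, p k * a k
  have hcentered : ∑ k, p k * (a k - μ) = 0 := by
    simp only [mul_sub, Finset.sum_sub_distrib, ← Finset.sum_mul, hsum, one_mul, μ, sub_self]
  have hmean : ∀ ω : Fin s → Fin n,
      (1 / s * ∑ t, a (ω t) - μ) ^ 2 = (1 / s) ^ 2 * (∑ t, (a (ω t) - μ)) ^ 2 := by
    intro ω
    rw [Finset.sum_sub_distrib, Finset.sum_const, Finset.card_univ, Fintype.card_fin,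
      nsmul_eq_mul]
    field_simp
  simp only [hmean, expec_const_mul, expec_sq_sum_eval_of_centered hsum _ hcentered]
  calc (1 / (s : ℝ)) ^ 2 * (s * ∑ k, p k * (a k - μ) ^ 2)
      = 1 / s * ∑ k, p k * (a k - μ) ^ 2 := by field_simp
    _ ≤ 1 / s * ∑ k, p k * a k ^ 2 :=
        mul_le_mul_of_nonneg_left (sum_mul_sub_sq_le hsum a) (by positivity)

end Expectation

lemma frobNorm_sq {m n : Type*} [Fintype m] [Fintype n] (A : Matrix m n ℝ) :
    frobNorm A ^ 2 = ∑ i, ∑ j, A i j ^ 2 := by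
  rw [frobNorm, Real.sq_sqrt (by positivity)]

lemma div_le_mul_of_le_mul_of_le_mul {x a y q c : ℝ} (hx : x ≤ a * y) (ha : a ≤ q * c)
    (hy : 0 ≤ y) (hq : 0 ≤ q) (hc : 0 ≤ c) : x / q ≤ c * y := by
  rcases hq.eq_or_lt with rfl | hq
  · simpa using mul_nonneg hc hy
  · rw [div_le_iff₀ hq]
    nlinarith

lemma mul_div_sq_eq_sq_div (q x : ℝ) : q * (x / q) ^ 2 = x ^ 2 / q := by
  rcases eq_or_ne q 0 with rfl | hq
  · simp
  · field_simp

section SampledProduct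

variable {m n p' s : ℕ} {p : Fin n → ℝ}

lemma mul_transpose_samplingMatrix_apply (A : Matrix (Fin m) (Fin n) ℝ) (ω : Fin s → Fin n)
    (i : Fin m) (t : Fin s) :
    (A * (samplingMatrix p s ω)ᵀ) i t = A i (ω t) * (1 / Real.sqrt (s * p (ω t))) := by
  simp [Matrix.mul_apply, samplingMatrix]

lemma samplingMatrix_mul_apply (B : Matrix (Fin n) (Fin p') ℝ) (ω : Fin s → Fin n)
    (t : Fin s) (j : Fin p') :
    (samplingMatrix p s ω * B) t j = 1 / Real.sqrt (s * p (ω t)) * B (ω t) j := by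
  simp [Matrix.mul_apply, samplingMatrix]

lemma sampledProduct_apply (hp : ∀ k, 0 ≤ p k) (A : Matrix (Fin m) (Fin n) ℝ)
    (B : Matrix (Fin n) (Fin p') ℝ) (ω : Fin s → Fin n) (i : Fin m) (j : Fin p') :
    (A * (samplingMatrix p s ω)ᵀ * samplingMatrix p s ω * B) i j
      = 1 / s * ∑ t, A i (ω t) * B (ω t) j / p (ω t) := by
  rw [Matrix.mul_assoc, Matrix.mul_apply, Finset.mul_sum]
  refine Finset.sum_congr rfl fun t _ => ?_
  rw [mul_transpose_samplingMatrix_apply, samplingMatrix_mul_apply]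
  field_simp
  rw [Real.sq_sqrt (mul_nonneg (Nat.cast_nonneg s) (hp (ω t)))]

lemma mul_apply_eq_sum_mul_div (A : Matrix (Fin m) (Fin n) ℝ) (B : Matrix (Fin n) (Fin p') ℝ)
    (hA : ∀ k, p k = 0 → ∀ i, A i k = 0) (i : Fin m) (j : Fin p') :
    (A * B) i j = ∑ k, p k * (A i k * B k j / p k) := by
  rw [Matrix.mul_apply]
  refine Finset.sum_congr rfl fun k _ => ?_
  rcases eq_or_ne (p k) 0 with hk | hk
  · simp [hA k hk i, hk]
  · field_simp

lemma sampledProduct_sub_apply (hp : ∀ k, 0 ≤ p k) (A : Matrix (Fin m) (Fin n) ℝ)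
    (B : Matrix (Fin n) (Fin p') ℝ) (hA : ∀ k, p k = 0 → ∀ i, A i k = 0)
    (ω : Fin s → Fin n) (i : Fin m) (j : Fin p') :
    (A * (samplingMatrix p s ω)ᵀ * samplingMatrix p s ω * B - A * B) i j
      = 1 / s * ∑ t, A i (ω t) * B (ω t) j / p (ω t) - ∑ k, p k * (A i k * B k j / p k) := by
  rw [Matrix.sub_apply, sampledProduct_apply hp, mul_apply_eq_sum_mul_div A B hA]

variable {c : ℝ} {A : Matrix (Fin m) (Fin n) ℝ}

lemma col_eq_zero_of_weight_eq_zero (hcol : ∀ k, ∑ i, A i k ^ 2 ≤ p k * c) {k : Fin n}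
    (hk : p k = 0) (i : Fin m) : A i k = 0 := by
  have hzero : ∑ i, A i k ^ 2 = 0 :=
    le_antisymm (by simpa [hk] using hcol k) (by positivity)
  simpa using (Finset.sum_eq_zero_iff_of_nonneg fun i _ => sq_nonneg (A i k)).mp hzero i
    (Finset.mem_univ i)

lemma expec_frobNorm_sq_sampledProduct_sub_le (hs : 0 < s) (hp : ∀ k, 0 ≤ p k)
    (hsum : ∑ k, p k = 1) (hc : 0 ≤ c) (hcol : ∀ k, ∑ i, A i k ^ 2 ≤ p k * c)
    (B : Matrix (Fin n) (Fin p') ℝ) :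
    expec p (fun ω : Fin s → Fin n =>
        frobNorm (A * (samplingMatrix p s ω)ᵀ * samplingMatrix p s ω * B - A * B) ^ 2)
      ≤ 1 / s * (c * frobNorm B ^ 2) := by
  have hA := fun k => col_eq_zero_of_weight_eq_zero (k := k) hcol
  have hterm : ∀ k, ∑ i, ∑ j, p k * (A i k * B k j / p k) ^ 2 ≤ c * ∑ j, B k j ^ 2 := by
    intro k
    simp only [mul_div_sq_eq_sq_div, ← Finset.sum_div, mul_pow, ← Finset.sum_mul_sum]
    exact div_le_mul_of_le_mul_of_le_mul le_rfl (hcol k) (by positivity) (hp k) hc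
  calc expec p (fun ω : Fin s → Fin n =>
        frobNorm (A * (samplingMatrix p s ω)ᵀ * samplingMatrix p s ω * B - A * B) ^ 2)
      = ∑ i, ∑ j, expec p (fun ω : Fin s → Fin n =>
          (1 / s * ∑ t, A i (ω t) * B (ω t) j / p (ω t)
            - ∑ k, p k * (A i k * B k j / p k)) ^ 2) := by
        simp only [frobNorm_sq, sampledProduct_sub_apply hp A B hA, expec_sum]
    _ ≤ ∑ i, ∑ j, 1 / s * ∑ k, p k * (A i k * B k j / p k) ^ 2 := by
        gcongr with i _ j _
        exact expec_sq_sampleMean_sub_le hs hsum (fun k => A i k * B k j / p k)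
    _ = 1 / s * ∑ k, ∑ i, ∑ j, p k * (A i k * B k j / p k) ^ 2 := by
        simp only [Finset.mul_sum]
        exact (Finset.sum_congr rfl fun i _ => Finset.sum_comm).trans Finset.sum_comm
    _ ≤ 1 / s * (c * frobNorm B ^ 2) := by
        refine mul_le_mul_of_nonneg_left ?_ (by positivity)
        rw [frobNorm_sq B, Finset.mul_sum]
        exact Finset.sum_le_sum fun k _ => hterm k

lemma expec_trace_sq_sampledProduct_sub_le (hs : 0 < s) (hp : ∀ k, 0 ≤ p k)
    (hsum : ∑ k, p k = 1) (hc : 0 ≤ c) (hcol : ∀ k, ∑ i, A i k ^ 2 ≤ p k * c)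
    (C : Matrix (Fin n) (Fin m) ℝ) :
    expec p (fun ω : Fin s → Fin n =>
        (A * (samplingMatrix p s ω)ᵀ * samplingMatrix p s ω * C - A * C).trace ^ 2)
      ≤ 1 / s * (c * frobNorm C ^ 2) := by
  have hA := fun k => col_eq_zero_of_weight_eq_zero (k := k) hcol
  set g : Fin n → ℝ := fun k => ∑ i, A i k * C k i / p k
  have htrace : ∀ ω : Fin s → Fin n,
      (A * (samplingMatrix p s ω)ᵀ * samplingMatrix p s ω * C - A * C).trace
        = 1 / s * ∑ t, g (ω t) - ∑ k, p k * g k := by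
    intro ω
    simp only [Matrix.trace, Matrix.diag, sampledProduct_sub_apply hp A C hA,
      Finset.sum_sub_distrib, Finset.mul_sum, g]
    congr 1 <;> exact Finset.sum_comm
  have hterm : ∀ k, p k * g k ^ 2 ≤ c * ∑ i, C k i ^ 2 := by
    intro k
    rw [show g k = (∑ i, A i k * C k i) / p k from Finset.sum_div .. |>.symm,
      mul_div_sq_eq_sq_div]
    exact div_le_mul_of_le_mul_of_le_mul (Finset.sum_mul_sq_le_sq_mul_sq _ _ _) (hcol k)
      (by positivity) (hp k) hc
  calc expec p (fun ω : Fin s → Fin n =>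
        (A * (samplingMatrix p s ω)ᵀ * samplingMatrix p s ω * C - A * C).trace ^ 2)
      = expec p (fun ω : Fin s → Fin n => (1 / s * ∑ t, g (ω t) - ∑ k, p k * g k) ^ 2) := by
        simp only [htrace]
    _ ≤ 1 / s * ∑ k, p k * g k ^ 2 := expec_sq_sampleMean_sub_le hs hsum g
    _ ≤ 1 / s * (c * frobNorm C ^ 2) := by
        refine mul_le_mul_of_nonneg_left ?_ (by positivity)
        rw [frobNorm_sq C, Finset.mul_sum]
        exact Finset.sum_le_sum fun k _ => hterm k

end SampledProduct

lemma sum_sq_col_le_frobNorm_sq {m n : ℕ} (A : Matrix (Fin m) (Fin n) ℝ) (k : Fin n) :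
    ∑ i, A i k ^ 2 ≤ frobNorm A ^ 2 := by
  rw [frobNorm_sq, Finset.sum_comm]
  exact Finset.single_le_sum (f := fun k => ∑ i, A i k ^ 2) (fun k _ => by positivity)
    (Finset.mem_univ k)

lemma sum_sq_col_le_mul_frobNorm_sq_div {m n : ℕ} {A : Matrix (Fin m) (Fin n) ℝ}
    {p : Fin n → ℝ} {β : ℝ} (hβ : 0 < β)
    (hpi : ∀ i, β * (∑ j, A j i ^ 2) / frobNorm A ^ 2 ≤ p i) (k : Fin n) :
    ∑ i, A i k ^ 2 ≤ p k * (frobNorm A ^ 2 / β) := by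
  rcases (sq_nonneg (frobNorm A)).eq_or_lt with hA | hA
  · simpa [← hA] using sum_sq_col_le_frobNorm_sq A k
  · rw [← mul_div_assoc, le_div_iff₀ hβ]
    linarith [(div_le_iff₀ hA).mp (hpi k)]

theorem stmt_7_general {m n p' : ℕ} (s : ℕ) (hs : 0 < s)
    (A : Matrix (Fin m) (Fin n) ℝ) (B : Matrix (Fin n) (Fin p') ℝ)
    (β : ℝ) (hβ0 : 0 < β)
    (p : Fin n → ℝ) (hp : ∀ i, 0 ≤ p i) (hsum : ∑ i, p i = 1)
    (hpi : ∀ i, β * (∑ j, (A j i) ^ 2) / frobNorm A ^ 2 ≤ p i) :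
    expec p (fun (ω : Fin s → Fin n) =>
        frobNorm (A * (samplingMatrix p s ω)ᵀ * samplingMatrix p s ω * B - A * B) ^ 2)
      ≤ 1 / (β * s) * (frobNorm A ^ 2 * frobNorm B ^ 2)
    ∧ ∀ C : Matrix (Fin n) (Fin m) ℝ,
        expec p (fun (ω : Fin s → Fin n) =>
          (Matrix.trace (A * (samplingMatrix p s ω)ᵀ * samplingMatrix p s ω * C
            - A * C)) ^ 2)
        ≤ 1 / (β * s) * (frobNorm A ^ 2 * frobNorm C ^ 2) := by
  have hcol := sum_sq_col_le_mul_frobNorm_sq_div hβ0 hpi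
  have hc : 0 ≤ frobNorm A ^ 2 / β := by positivity
  have hscale : ∀ x : ℝ, 1 / (β * s) * (frobNorm A ^ 2 * x) = 1 / s * (frobNorm A ^ 2 / β * x) :=
    fun x => by ring
  refine ⟨?_, fun C => ?_⟩
  · rw [hscale]
    exact expec_frobNorm_sq_sampledProduct_sub_le hs hp hsum hc hcol B
  · rw [hscale]
    exact expec_trace_sq_sampledProduct_sub_le hs hp hsum hc hcol C

/-- sampled matrix multiplication with probabilities proportional
(up to β) to squared column norms of A. -/
theorem stmt_7 {m n p' : ℕ} (s : ℕ) (hs : 0 < s)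
    (A : Matrix (Fin m) (Fin n) ℝ) (B : Matrix (Fin n) (Fin p') ℝ)
    (β : ℝ) (hβ0 : 0 < β) (hβ1 : β ≤ 1)
    (p : Fin n → ℝ) (hp : ∀ i, 0 ≤ p i) (hsum : ∑ i, p i = 1)
    (hpi : ∀ i, β * (∑ j, (A j i) ^ 2) / frobNorm A ^ 2 ≤ p i) :
    expec p (fun (ω : Fin s → Fin n) =>
        frobNorm (A * (samplingMatrix p s ω)ᵀ * samplingMatrix p s ω * B - A * B) ^ 2)
      ≤ 1 / (β * s) * (frobNorm A ^ 2 * frobNorm B ^ 2)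
    ∧ ∀ C : Matrix (Fin n) (Fin m) ℝ,
        expec p (fun (ω : Fin s → Fin n) =>
          (Matrix.trace (A * (samplingMatrix p s ω)ᵀ * samplingMatrix p s ω * C
            - A * C)) ^ 2)
        ≤ 1 / (β * s) * (frobNorm A ^ 2 * frobNorm C ^ 2) :=
  stmt_7_general s hs A B β hβ0 p hp hsum hpi
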